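/- For every λ ∈ ℝ, the subspace 𝔪_λ = 𝔞 + 𝔫₁ + 𝔭_λ of the real Lie algebra of (n+1)×(n+1) quaternionic matrices (with bracket the matrix commutator [M,N] = MN − NM) is invariant under the adjoint action of 𝔥: for every H ∈ 𝔥 and M ∈ 𝔪_λ one has [H, M] ∈ 𝔪_λ. -/

import Mathlib

open scoped Quaternion

noncomputable section

/-- The index of the second diagonal block (position `n-1`) among `0, …, n`. -/
def pos1 (n : ℕ) : Fin (n+1) := ⟨n - 1, by omega⟩

/-- The index of the third diagonal block (position `n`) among `0, …, n`. -/
def pos2 (n : ℕ) : Fin (n+1) := ⟨n, by omega⟩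

/-- `A = diag(0_{n-1}, 1, -1)`. -/
def Amat (n : ℕ) : Matrix (Fin (n+1)) (Fin (n+1)) ℍ[ℝ] :=
  Matrix.of fun i j =>
    if i = j ∧ i = pos1 n then 1 else if i = j ∧ i = pos2 n then -1 else 0

/-- `diag(0_{n-1}, a, a)`, the generic element of `𝔥` (for `a` purely imaginary). -/
def Hmat (n : ℕ) (a : ℍ[ℝ]) : Matrix (Fin (n+1)) (Fin (n+1)) ℍ[ℝ] :=
  Matrix.of fun i j => if i = j ∧ (i = pos1 n ∨ i = pos2 n) then a else 0

/-- `ρ₁(v)`: the matrix whose `(1,3)`-block is `v ∈ ℍ^{n-1}` and whose `(2,1)`-block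
is `-v̄ᵀ`, all other blocks zero. -/
def rho1 (n : ℕ) (v : Fin (n-1) → ℍ[ℝ]) : Matrix (Fin (n+1)) (Fin (n+1)) ℍ[ℝ] :=
  Matrix.of fun i j =>
    if h : (i : ℕ) < n - 1 ∧ j = pos2 n then v ⟨(i : ℕ), h.1⟩
    else if h' : i = pos1 n ∧ (j : ℕ) < n - 1 then -(star (v ⟨(j : ℕ), h'.2⟩))
    else 0

/-- `P(x)`: the matrix with `(2,2)`-entry `λx`, `(2,3)`-entry `x`, `(3,3)`-entry `λx`,
all other entries zero; the generic element of `𝔭_λ` (for `x` purely imaginary). -/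
def Pmat (n : ℕ) (lam : ℝ) (x : ℍ[ℝ]) : Matrix (Fin (n+1)) (Fin (n+1)) ℍ[ℝ] :=
  Matrix.of fun i j =>
    if i = pos1 n ∧ j = pos1 n then lam • x
    else if i = pos1 n ∧ j = pos2 n then x
    else if i = pos2 n ∧ j = pos2 n then lam • x
    else 0

/-- The subspace `𝔥 = {diag(0_{n-1}, a, a) : a ∈ Im ℍ}`. -/
def hSet (n : ℕ) : Set (Matrix (Fin (n+1)) (Fin (n+1)) ℍ[ℝ]) :=
  {H | ∃ a : ℍ[ℝ], a.re = 0 ∧ H = Hmat n a}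

/-- The subspace `𝔪_λ = 𝔞 + 𝔫₁ + 𝔭_λ`. -/
def mLam (n : ℕ) (lam : ℝ) : Set (Matrix (Fin (n+1)) (Fin (n+1)) ℍ[ℝ]) :=
  {M | ∃ (t : ℝ) (v : Fin (n-1) → ℍ[ℝ]) (x : ℍ[ℝ]), x.re = 0 ∧
    M = t • Amat n + rho1 n v + Pmat n lam x}


lemma Hmul (n : ℕ) (a : ℍ[ℝ]) (M : Matrix (Fin (n+1)) (Fin (n+1)) ℍ[ℝ]) (i j : Fin (n+1)) :
    (Hmat n a * M) i j = if i = pos1 n ∨ i = pos2 n then a * M i j else 0 := by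
  simp only [Matrix.mul_apply, Hmat, Matrix.of_apply, ite_and, ite_mul, zero_mul,
    Finset.sum_ite_eq, Finset.mem_univ, if_true]

lemma mulH (n : ℕ) (a : ℍ[ℝ]) (M : Matrix (Fin (n+1)) (Fin (n+1)) ℍ[ℝ]) (i j : Fin (n+1)) :
    (M * Hmat n a) i j = if j = pos1 n ∨ j = pos2 n then M i j * a else 0 := by
  have hk : ∀ k, Hmat n a k j
      = if k = j then (if j = pos1 n ∨ j = pos2 n then a else 0) else 0 := by
    intro k
    by_cases hk : k = j
    · subst hk; simp [Hmat]
    · simp [Hmat, hk]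
  simp only [Matrix.mul_apply, hk, mul_ite, mul_zero, Finset.sum_ite_eq', Finset.mem_univ,
    if_true]

lemma tri (n : ℕ) (hn : 2 ≤ n) (i : Fin (n+1)) :
    (i : ℕ) < n - 1 ∨ i = pos1 n ∨ i = pos2 n := by
  rcases i with ⟨i, hi⟩
  simp only [pos1, pos2, Fin.ext_iff]
  omega

lemma ne1 (n : ℕ) {i : Fin (n+1)} (hi : (i : ℕ) < n - 1) : i ≠ pos1 n ∧ i ≠ pos2 n := by
  constructor <;> (simp only [pos1, pos2, ne_eq, Fin.ext_iff]; omega)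

/-- for every `λ ∈ ℝ`, the subspace `𝔪_λ = 𝔞 + 𝔫₁ + 𝔭_λ` is invariant
under the adjoint action of `𝔥`: for every `H ∈ 𝔥` and `M ∈ 𝔪_λ`, `[H, M] ∈ 𝔪_λ`. -/
theorem stmt19 (n : ℕ) (hn : 2 ≤ n) (lam : ℝ)
    (H : Matrix (Fin (n+1)) (Fin (n+1)) ℍ[ℝ]) (hH : H ∈ hSet n)
    (M : Matrix (Fin (n+1)) (Fin (n+1)) ℍ[ℝ]) (hM : M ∈ mLam n lam) :
    H * M - M * H ∈ mLam n lam := by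
  obtain ⟨a, ha, rfl⟩ := hH
  obtain ⟨t, v, x, hx, rfl⟩ := hM
  have hsa : star a = -a := by
    ext <;> simp [ha]
  refine ⟨0, fun i => -(v i * a), a * x - x * a, ?_, ?_⟩
  · simp only [Quaternion.re_sub, Quaternion.re_mul]
    ring
  · have e1 : ((pos1 n : ℕ)) = n - 1 := rfl
    have e2 : ((pos2 n : ℕ)) = n := rfl
    have h12 : pos1 n ≠ pos2 n := by
      simp only [pos1, pos2, ne_eq, Fin.ext_iff]; omega
    have h21 : pos2 n ≠ pos1 n := h12.symm
    have hlt1 : ¬ ((pos1 n : ℕ) < n - 1) := by rw [e1]; omega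
    have hlt2 : ¬ ((pos2 n : ℕ) < n - 1) := by rw [e2]; omega
    refine Matrix.ext fun i j => ?_
    rw [Matrix.sub_apply, Hmul, mulH]
    rcases tri n hn i with hi | rfl | rfl <;> rcases tri n hn j with hj | rfl | rfl
    · -- i generic, j generic
      obtain ⟨hi1, hi2⟩ := ne1 n hi
      obtain ⟨hj1, hj2⟩ := ne1 n hj
      simp [Amat, rho1, Pmat, hi1, hi2, hj1, hj2, Ne.symm hi1, Ne.symm hi2, Ne.symm hj1, Ne.symm hj2, zero_smul]
    · -- i generic, j = pos1
      obtain ⟨hi1, hi2⟩ := ne1 n hi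
      simp [Amat, rho1, Pmat, hi1, hi2, Ne.symm hi1, Ne.symm hi2, h12, h21, hlt1, zero_smul]
    · -- i generic, j = pos2
      obtain ⟨hi1, hi2⟩ := ne1 n hi
      simp [Amat, rho1, Pmat, hi1, hi2, Ne.symm hi1, Ne.symm hi2, hi, hlt2, zero_smul]
    · -- i = pos1, j generic
      obtain ⟨hj1, hj2⟩ := ne1 n hj
      simp [Amat, rho1, Pmat, hj1, hj2, Ne.symm hj1, Ne.symm hj2, h12, h21, hlt1, hlt2, hj,
        zero_smul, star_mul, hsa, mul_neg, neg_mul, neg_neg, star_neg]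
    · -- i = pos1, j = pos1
      simp only [Matrix.add_apply, Matrix.smul_apply, Amat, rho1, Pmat, Matrix.of_apply,
        h12, h21, hlt1, hlt2, zero_smul, Matrix.zero_apply, and_self, and_false, false_and,
        if_true, ite_true, ite_false, true_or, or_false, dite_false, if_pos, dif_neg,
        not_false_eq_true, add_zero, zero_add, if_false]
      rw [smul_sub]
      simp only [mul_add, add_mul, mul_smul_comm, smul_mul_assoc, mul_one, one_mul]
      abel
    · -- i = pos1, j = pos2
      simp only [Matrix.add_apply, Matrix.smul_apply, Amat, rho1, Pmat, Matrix.of_apply,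
        h12, h21, hlt1, hlt2, zero_smul, Matrix.zero_apply, and_self, and_false, false_and,
        and_true, true_and, if_true, ite_true, ite_false, true_or, or_true, dite_false,
        dif_neg, not_false_eq_true, add_zero, zero_add, if_false, smul_zero]
    · -- i = pos2, j generic
      obtain ⟨hj1, hj2⟩ := ne1 n hj
      simp [Amat, rho1, Pmat, hj1, hj2, Ne.symm hj1, Ne.symm hj2, h12, h21, hlt2, zero_smul]
    · -- i = pos2, j = pos1
      simp only [Matrix.add_apply, Matrix.smul_apply, Amat, rho1, Pmat, Matrix.of_apply,
        h12, h21, hlt1, hlt2, zero_smul, Matrix.zero_apply, and_false, false_and, and_self,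
        and_true, true_and, if_true, ite_true, ite_false, true_or, or_true, dite_false,
        dif_neg, not_false_eq_true, add_zero, zero_add, if_false, smul_zero, mul_zero,
        zero_mul, sub_zero]
    · -- i = pos2, j = pos2
      simp only [Matrix.add_apply, Matrix.smul_apply, Amat, rho1, Pmat, Matrix.of_apply,
        h12, h21, hlt1, hlt2, zero_smul, Matrix.zero_apply, and_self, and_false, false_and,
        and_true, true_and, if_true, ite_true, ite_false, or_true, dite_false,
        dif_neg, not_false_eq_true, add_zero, zero_add, if_false]
      have hc : a * (t • (-1 : ℍ[ℝ])) = (t • (-1 : ℍ[ℝ])) * a := by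
        rw [mul_smul_comm, smul_mul_assoc, mul_neg_one, neg_one_mul]
      rw [smul_sub, mul_add, add_mul, mul_smul_comm lam a x, smul_mul_assoc lam x a, hc]
      abel


end
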